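/- Let $Z:[0,1]^d\to\mathbb{R}$ have partial derivatives up to order $m=\lfloor\beta\rfloor$ with all derivatives of order $m$ Hölder continuous of exponent $\beta-m\in(0,1]$ with constant $M$. Let $\mathbf s$ be a multi-index with $|\mathbf s|>\beta$, and suppose weights $w_{\mathbf j}(x)$ satisfy $\sum_{\mathbf j}(x_{\mathbf j}-x)^{\mathbf r}w_{\mathbf j}(x)=0$ for all $|\mathbf r|\le m$ (note $m<|\mathbf s|$), $w_{\mathbf j}(x)=0$ if $\|x-x_{\mathbf j}\|_\infty>h$, and $\sum_{\mathbf j}|w_{\mathbf j}(x)|\le C_3 h^{-|\mathbf s|}$. Then $\sup_{x\in[0,1]^d}\big|\sum_{\mathbf j}w_{\mathbf j}(x)Z(x_{\mathbf j})\big|\le C_3\,M\,h^{\beta-|\mathbf s|}\sum_{|\mathbf k|=m}\frac{1}{\mathbf k!}$. -/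

import Mathlib

/-!
Expand `Z` around `x` by Taylor's formula of order `m = ⌊β⌋`. Only partial derivatives along
coordinate lines are available, so the expansion is done one coordinate at a time rather than
along the segment from `x` to `x_j`; every remainder term involves an order-`m` derivative at a
point of the box spanned by `x` and `x_j`, which is within `M ‖x_j - x‖^(β-m)` of its value at `x`.
This bounds the remainder by `M ‖x_j - x‖^(β-m) ∑_{|k|=m} |x_j - x|^k / k!`. The moment
conditions annihilate the Taylor polynomial in `∑_j w_j(x) Z(x_j)`, and what is left is controlled
by the localization `‖x_j - x‖ ≤ h` and by `∑_j |w_j(x)| ≤ C₃ h^(-|s|)`.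
-/

open Set Finset

theorem hasDerivAt_pow_div_factorial (c a t : ℝ) (n : ℕ) :
    HasDerivAt (fun t => c * (t - a) ^ (n + 1) / (n + 1).factorial)
      (c * (t - a) ^ n / n.factorial) t := by
  have h := ((((hasDerivAt_id t).sub_const a).pow (n + 1)).const_mul c).div_const
    ((n + 1).factorial : ℝ)
  refine h.congr_deriv ?_
  simp only [id, Nat.factorial_succ, Nat.add_sub_cancel]
  push_cast
  field_simp

theorem abs_le_of_abs_deriv_le_pow_of_le {F F' : ℝ → ℝ} {a b ε : ℝ} {n : ℕ} (hab : a ≤ b)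
    (hF : ∀ t ∈ Icc a b, HasDerivWithinAt F (F' t) (Icc a b) t) (hFa : F a = 0)
    (hF' : ∀ t ∈ Icc a b, |F' t| ≤ ε * |t - a| ^ n / n.factorial) :
    |F b| ≤ ε * |b - a| ^ (n + 1) / (n + 1).factorial := by
  have key := image_norm_le_of_norm_deriv_right_le_deriv_boundary
    (fun t ht => (hF t ht).continuousWithinAt)
    (fun t ht => (hF t (Ico_subset_Icc_self ht)).mono_of_mem_nhdsWithin
      (Icc_mem_nhdsGE_of_mem ht))
    (by simp [hFa]) (hasDerivAt_pow_div_factorial ε a · n)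
    (fun t ht => by
      simpa [abs_of_nonneg (sub_nonneg.2 ht.1)] using hF' t (Ico_subset_Icc_self ht))
    (right_mem_Icc.2 hab)
  simpa [abs_of_nonneg (sub_nonneg.2 hab)] using key

theorem abs_le_of_abs_deriv_le_pow {F F' : ℝ → ℝ} {a b ε : ℝ} {n : ℕ}
    (hF : ∀ t ∈ uIcc a b, HasDerivWithinAt F (F' t) (uIcc a b) t) (hFa : F a = 0)
    (hF' : ∀ t ∈ uIcc a b, |F' t| ≤ ε * |t - a| ^ n / n.factorial) :
    |F b| ≤ ε * |b - a| ^ (n + 1) / (n + 1).factorial := by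
  rcases le_total a b with hab | hba
  · rw [uIcc_of_le hab] at hF hF'
    exact abs_le_of_abs_deriv_le_pow_of_le hab hF hFa hF'
  · -- reflect `t ↦ -t` to reduce to the case `a ≤ b`
    rw [uIcc_of_ge hba] at hF hF'
    have hneg : ∀ t ∈ Icc (-a) (-b), -t ∈ Icc b a := fun t ht =>
      ⟨by linarith [ht.2], by linarith [ht.1]⟩
    have key := abs_le_of_abs_deriv_le_pow_of_le (F := fun t => F (-t)) (F' := fun t => -F' (-t))
      (neg_le_neg hba) (fun t ht => by
        have := (hF (-t) (hneg t ht)).comp t (hasDerivAt_neg t).hasDerivWithinAt hneg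
        exact this.congr_deriv (by ring))
      (by simpa using hFa)
      (fun t ht => by
        rw [abs_neg, show t - -a = -(-t - a) by ring, abs_neg]
        exact hF' (-t) (hneg t ht))
    rwa [neg_neg, show -b - -a = -(b - a) by ring, abs_neg] at key

theorem hasDerivAt_sum_pow_div_factorial (q : ℕ → ℝ) (a t : ℝ) (n : ℕ) :
    HasDerivAt (fun t => ∑ p ∈ range (n + 1), q p * (t - a) ^ p / p.factorial)
      (∑ p ∈ range n, q (p + 1) * (t - a) ^ p / p.factorial) t := by
  induction n with
  | zero => simpa using hasDerivAt_const t (q 0)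
  | succ n ih =>
    simp only [sum_range_succ _ (n + 1), sum_range_succ _ n] at ih ⊢
    exact ih.add (hasDerivAt_pow_div_factorial (q (n + 1)) a t n)

theorem abs_sub_taylor_sum_le {g : ℕ → ℝ → ℝ} {a c ε : ℝ} (n : ℕ) {b : ℝ}
    (hg : ∀ p < n, ∀ t ∈ uIcc a b, HasDerivWithinAt (g p) (g (p + 1) t) (uIcc a b) t)
    (hc : ∀ t ∈ uIcc a b, |g n t - c| ≤ ε) :
    |g 0 b - ∑ p ∈ range n, g p a * (b - a) ^ p / p.factorial - c * (b - a) ^ n / n.factorial|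
      ≤ ε * |b - a| ^ n / n.factorial := by
  induction n generalizing g b with
  | zero => simpa using hc b right_mem_uIcc
  | succ n ih =>
    -- the remainder of order `n + 1` has as derivative the remainder of order `n` of `g (· + 1)`
    refine abs_le_of_abs_deriv_le_pow (F := fun t => g 0 t -
        ∑ p ∈ range (n + 1), g p a * (t - a) ^ p / p.factorial -
          c * (t - a) ^ (n + 1) / (n + 1).factorial)
      (F' := fun t => g 1 t - ∑ p ∈ range n, g (p + 1) a * (t - a) ^ p / p.factorial -
          c * (t - a) ^ n / n.factorial) (fun t ht => ?_) ?_ (fun t ht => ?_)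
    · exact ((hg 0 n.succ_pos t ht).sub
        (hasDerivAt_sum_pow_div_factorial (g · a) a t n).hasDerivWithinAt).sub
        (hasDerivAt_pow_div_factorial c a t n).hasDerivWithinAt
    · simp [sum_range_succ']
    · have hsub : uIcc a t ⊆ uIcc a b := uIcc_subset_uIcc left_mem_uIcc ht
      exact ih (g := fun p => g (p + 1))
        (fun p hp s hs => (hg (p + 1) (by omega) s (hsub hs)).mono hsub)
        (fun s hs => hc s (hsub hs))

theorem Finset.Nat.sum_antidiagonalTuple_succ {M : Type*} [AddCommMonoid M] {d : ℕ}
    (f : (Fin (d + 1) → ℕ) → M) (n : ℕ) :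
    ∑ k ∈ Nat.antidiagonalTuple (d + 1) n, f k =
      ∑ p ∈ range (n + 1), ∑ k ∈ Nat.antidiagonalTuple d (n - p), f (Fin.cons p k) := by
  rw [sum_sigma']
  refine sum_bij' (fun k _ => ⟨k 0, Fin.tail k⟩) (fun pk _ => Fin.cons pk.1 pk.2)
    (fun k hk => ?_) (fun pk hpk => ?_) (fun k _ => by simp) (fun pk _ => by simp)
    (fun k _ => by simp)
  · simp only [Nat.mem_antidiagonalTuple, Fin.sum_univ_succ, mem_sigma, mem_range] at hk ⊢
    exact ⟨by omega, by simp [Fin.tail]; omega⟩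
  · simp only [Nat.mem_antidiagonalTuple, Fin.sum_univ_succ, mem_sigma, mem_range] at hpk ⊢
    simp only [Fin.cons_zero, Fin.cons_succ]
    omega

theorem Finset.sum_range_sum_range_sub {M : Type*} [AddCommMonoid M] (F : ℕ → ℕ → M) (n : ℕ) :
    ∑ q ∈ range (n + 1), ∑ p ∈ range (q + 1), F p (q - p) =
      ∑ p ∈ range (n + 1), ∑ r ∈ range (n - p + 1), F p r := by
  simp only [range_eq_Ico]
  rw [← sum_Ico_Ico_comm]
  refine sum_congr rfl fun p hp => ?_
  rw [sum_Ico_eq_sum_range]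
  have : n + 1 - p = n - p + 1 := by simp at hp; omega
  simp [this]

noncomputable section MultiIndex

variable {d : ℕ}

def monomialDivFactorial (v : Fin d → ℝ) (k : Fin d → ℕ) : ℝ :=
  ∏ i, v i ^ k i / (k i).factorial

def taylorPolynomial (c : (Fin d → ℕ) → ℝ) (n : ℕ) (v : Fin d → ℝ) : ℝ :=
  ∑ q ∈ range (n + 1), ∑ k ∈ Nat.antidiagonalTuple d q, c k * monomialDivFactorial v k

theorem monomialDivFactorial_cons (v : Fin (d + 1) → ℝ) (p : ℕ) (k : Fin d → ℕ) :
    monomialDivFactorial v (Fin.cons p k) =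
      v 0 ^ p / p.factorial * monomialDivFactorial (Fin.tail v) k := by
  simp only [monomialDivFactorial, Fin.prod_univ_succ, Fin.cons_zero, Fin.cons_succ, Fin.tail]

theorem sum_antidiagonalTuple_monomialDivFactorial_succ (v : Fin (d + 1) → ℝ) (n : ℕ) :
    ∑ k ∈ Nat.antidiagonalTuple (d + 1) n, monomialDivFactorial v k =
      ∑ p ∈ range (n + 1), v 0 ^ p / p.factorial *
        ∑ k ∈ Nat.antidiagonalTuple d (n - p), monomialDivFactorial (Fin.tail v) k := by
  simp only [Nat.sum_antidiagonalTuple_succ, monomialDivFactorial_cons, mul_sum]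

theorem taylorPolynomial_succ (c : (Fin (d + 1) → ℕ) → ℝ) (n : ℕ) (v : Fin (d + 1) → ℝ) :
    taylorPolynomial c n v = ∑ p ∈ range (n + 1), v 0 ^ p / p.factorial *
      taylorPolynomial (fun k => c (Fin.cons p k)) (n - p) (Fin.tail v) := by
  simp only [taylorPolynomial, Nat.sum_antidiagonalTuple_succ, monomialDivFactorial_cons, mul_sum]
  rw [sum_range_sum_range_sub (fun p r => ∑ k ∈ Nat.antidiagonalTuple d r,
    c (Fin.cons p k) * (v 0 ^ p / p.factorial * monomialDivFactorial (Fin.tail v) k))]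
  refine sum_congr rfl fun q hq => sum_congr rfl fun p hp => sum_congr rfl fun k hk => by ring

theorem taylorPolynomial_zero (c : (Fin d → ℕ) → ℝ) (v : Fin d → ℝ) :
    taylorPolynomial c 0 v = c 0 := by
  simp [taylorPolynomial, Nat.antidiagonalTuple_zero_right, monomialDivFactorial]

end MultiIndex

theorem Fin.cons_mem_uIcc_iff {d : ℕ} {x y : Fin (d + 1) → ℝ} {t : ℝ} {u : Fin d → ℝ} :
    (Fin.cons t u : Fin (d + 1) → ℝ) ∈ uIcc x y ↔
      t ∈ uIcc (x 0) (y 0) ∧ u ∈ uIcc (Fin.tail x) (Fin.tail y) := by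
  simp only [← pi_univ_uIcc, mem_univ_pi, Fin.forall_fin_succ, Fin.cons_zero, Fin.cons_succ,
    Fin.tail]

theorem abs_sub_taylorPolynomial_le_of_cons {d n : ℕ} {c : (Fin (d + 1) → ℕ) → ℝ}
    {v : Fin (d + 1) → ℝ} {f ε : ℝ} (G : ℕ → ℝ)
    (hfirst : |f - ∑ p ∈ range n, G p * v 0 ^ p / p.factorial -
      c (Fin.cons n 0) * v 0 ^ n / n.factorial| ≤ ε * |v 0| ^ n / n.factorial)
    (htail : ∀ p < n, |G p - taylorPolynomial (fun k => c (Fin.cons p k)) (n - p) (Fin.tail v)| ≤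
      ε * ∑ k ∈ Nat.antidiagonalTuple d (n - p),
        monomialDivFactorial (Fin.tail fun i => |v i|) k) :
    |f - taylorPolynomial c n v| ≤
      ε * ∑ k ∈ Nat.antidiagonalTuple (d + 1) n, monomialDivFactorial (fun i => |v i|) k := by
  rw [taylorPolynomial_succ, sum_antidiagonalTuple_monomialDivFactorial_succ, sum_range_succ,
    sum_range_succ, Nat.sub_self, taylorPolynomial_zero, Nat.antidiagonalTuple_zero_right,
    sum_singleton]
  have hswap : ∑ p ∈ range n, G p * v 0 ^ p / p.factorial =
      ∑ p ∈ range n, v 0 ^ p / p.factorial * G p :=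
    sum_congr rfl fun p _ => by ring
  calc _ = |(f - ∑ p ∈ range n, G p * v 0 ^ p / p.factorial -
          c (Fin.cons n 0) * v 0 ^ n / n.factorial) +
        ∑ p ∈ range n, v 0 ^ p / p.factorial *
          (G p - taylorPolynomial (fun k => c (Fin.cons p k)) (n - p) (Fin.tail v))| := by
        simp only [mul_sub, sum_sub_distrib, hswap]
        ring_nf
    _ ≤ ε * |v 0| ^ n / n.factorial + ∑ p ∈ range n, |v 0| ^ p / p.factorial *
          (ε * ∑ k ∈ Nat.antidiagonalTuple d (n - p),
            monomialDivFactorial (Fin.tail fun i => |v i|) k) := by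
        refine (abs_add_le _ _).trans (add_le_add hfirst ((abs_sum_le_sum_abs _ _).trans
          (sum_le_sum fun p hp => ?_)))
        rw [abs_mul, abs_div, abs_pow, Nat.abs_cast]
        exact mul_le_mul_of_nonneg_left (htail p (mem_range.1 hp)) (by positivity)
    _ = _ := by
        simp only [monomialDivFactorial, Pi.zero_apply, pow_zero, Nat.factorial_zero,
          Nat.cast_one, div_one, prod_const_one, mul_one, mul_add, mul_sum]
        ring_nf

theorem abs_sub_taylorPolynomial_le {d : ℕ} (n : ℕ) {D : (Fin d → ℕ) → (Fin d → ℝ) → ℝ}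
    {x y : Fin d → ℝ} {ε : ℝ}
    (hD : ∀ b : Fin d → ℕ, ∑ i, b i < n → ∀ i, ∀ z ∈ uIcc x y,
      HasDerivWithinAt (fun t => D b (Function.update z i t))
        (D (Function.update b i (b i + 1)) z) (uIcc (x i) (y i)) (z i))
    (hrem : ∀ b : Fin d → ℕ, ∑ i, b i = n → ∀ z ∈ uIcc x y, |D b z - D b x| ≤ ε) :
    |D 0 y - taylorPolynomial (fun k => D k x) n (y - x)| ≤
      ε * ∑ k ∈ Nat.antidiagonalTuple d n, monomialDivFactorial (fun i => |y i - x i|) k := by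
  induction d generalizing n with
  | zero =>
    obtain rfl : x = y := Subsingleton.elim x y
    cases n with
    | zero => simpa [taylorPolynomial_zero, Nat.antidiagonalTuple_zero_right,
        monomialDivFactorial] using hrem 0 (by simp) x left_mem_uIcc
    | succ n => simp [taylorPolynomial, sum_range_succ', monomialDivFactorial]
  | succ d ih =>
    -- move along coordinate `0` first, with the tail at `y`; then expand each coefficient
    -- `g p (x 0) = D (cons p 0) (cons (x 0) (tail y))` in the tail variables
    set g : ℕ → ℝ → ℝ := fun p t => D (Fin.cons p 0) (Fin.cons t (Fin.tail y))
    have hg : ∀ p < n, ∀ t ∈ uIcc (x 0) (y 0),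
        HasDerivWithinAt (g p) (g (p + 1) t) (uIcc (x 0) (y 0)) t := by
      intro p hp t ht
      have := hD (Fin.cons p 0) (by simpa [Fin.sum_univ_succ]) 0 (Fin.cons t (Fin.tail y))
        (Fin.cons_mem_uIcc_iff.2 ⟨ht, right_mem_uIcc⟩)
      simpa [g, Fin.update_cons_zero] using this
    have hy : D 0 y = g 0 (y 0) := by
      simp only [g, Fin.cons_self_tail, show (Fin.cons 0 0 : Fin (d + 1) → ℕ) = 0 from
        Matrix.cons_zero_zero]
    refine abs_sub_taylorPolynomial_le_of_cons (fun p => g p (x 0)) ?_ fun p hp => ?_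
    · rw [hy]
      exact abs_sub_taylor_sum_le n hg fun t ht => hrem (Fin.cons n 0)
        (by simp [Fin.sum_univ_succ]) _ (Fin.cons_mem_uIcc_iff.2 ⟨ht, right_mem_uIcc⟩)
    · have := ih (n - p) (D := fun κ u => D (Fin.cons p κ) (Fin.cons (x 0) u))
        (x := Fin.tail x) (y := Fin.tail y) (fun κ hκ i u hu => by
          have := hD (Fin.cons p κ) (by rw [Fin.sum_univ_succ]; simp; omega) i.succ
            (Fin.cons (x 0) u) (Fin.cons_mem_uIcc_iff.2 ⟨left_mem_uIcc, hu⟩)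
          simpa [← Fin.cons_update, Fin.tail] using this)
        (fun κ hκ u hu => by
          have := hrem (Fin.cons p κ) (by rw [Fin.sum_univ_succ]; simp; omega)
            (Fin.cons (x 0) u) (Fin.cons_mem_uIcc_iff.2 ⟨left_mem_uIcc, hu⟩)
          simpa using this)
      rw [Fin.cons_self_tail] at this
      exact this

theorem sum_mul_taylorPolynomial_eq_zero {ι : Type*} [Fintype ι] {d : ℕ} (w : ι → ℝ)
    (v : ι → Fin d → ℝ) (n : ℕ)
    (hw : ∀ r : Fin d → ℕ, ∑ i, r i ≤ n → ∑ j, (∏ i, v j i ^ r i) * w j = 0)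
    (c : (Fin d → ℕ) → ℝ) :
    ∑ j, w j * taylorPolynomial c n (v j) = 0 := by
  simp only [taylorPolynomial, mul_sum]
  rw [sum_comm]
  refine sum_eq_zero fun q hq => ?_
  rw [sum_comm]
  refine sum_eq_zero fun k hk => ?_
  have hmono : ∀ j, w j * (c k * monomialDivFactorial (v j) k) =
      c k / (∏ i, ((k i).factorial : ℝ)) * ((∏ i, v j i ^ k i) * w j) := fun j => by
    rw [monomialDivFactorial, prod_div_distrib]
    ring
  rw [sum_congr rfl fun j _ => hmono j, ← mul_sum,
    hw k ((Nat.mem_antidiagonalTuple.1 hk).le.trans (by simpa [Nat.lt_succ_iff] using hq)),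
    mul_zero]

theorem abs_sum_mul_le_of_abs_sub_le {ι : Type*} [Fintype ι] {w f P : ι → ℝ} {R : ℝ}
    (hP : ∑ j, w j * P j = 0) (hR : ∀ j, w j ≠ 0 → |f j - P j| ≤ R) :
    |∑ j, w j * f j| ≤ R * ∑ j, |w j| := by
  have hfP : ∑ j, w j * f j = ∑ j, w j * (f j - P j) := by
    simp only [mul_sub, sum_sub_distrib, hP, sub_zero]
  rw [hfP, mul_sum]
  refine (abs_sum_le_sum_abs _ _).trans (sum_le_sum fun j _ => ?_)
  rcases eq_or_ne (w j) 0 with hw | hw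
  · simp [hw]
  · rw [abs_mul, mul_comm R]
    exact mul_le_mul_of_nonneg_left (hR j hw) (abs_nonneg _)

theorem sum_antidiagonalTuple_monomialDivFactorial_le {d : ℕ} {v : Fin d → ℝ} {r : ℝ}
    (hv : ∀ i, |v i| ≤ r) (n : ℕ) :
    ∑ k ∈ Nat.antidiagonalTuple d n, monomialDivFactorial (fun i => |v i|) k ≤
      r ^ n * ∑ k ∈ Nat.antidiagonalTuple d n, 1 / ∏ i, ((k i).factorial : ℝ) := by
  rw [mul_sum]
  refine sum_le_sum fun k hk => ?_
  calc monomialDivFactorial (fun i => |v i|) k ≤ ∏ i, r ^ k i / (k i).factorial :=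
        prod_le_prod (fun i _ => by positivity) fun i _ => by gcongr; exact hv i
    _ = r ^ n * (1 / ∏ i, ((k i).factorial : ℝ)) := by
        rw [prod_div_distrib, prod_pow_eq_pow_sum, Nat.mem_antidiagonalTuple.1 hk]
        ring

theorem abs_sub_taylorPolynomial_le_of_holder {d : ℕ} {l u : Fin d → ℝ} {M α : ℝ}
    (hM : 0 ≤ M) (hα : 0 ≤ α) (m : ℕ) {D : (Fin d → ℕ) → (Fin d → ℝ) → ℝ}
    (hD : ∀ b : Fin d → ℕ, ∑ i, b i < m → ∀ i, ∀ z ∈ Icc l u,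
      HasDerivWithinAt (fun t => D b (Function.update z i t))
        (D (Function.update b i (b i + 1)) z) (Icc (l i) (u i)) (z i))
    (hhold : ∀ b : Fin d → ℕ, ∑ i, b i = m → ∀ z ∈ Icc l u, ∀ z' ∈ Icc l u,
      |D b z - D b z'| ≤ M * dist z z' ^ α)
    {x y : Fin d → ℝ} (hx : x ∈ Icc l u) (hy : y ∈ Icc l u) :
    |D 0 y - taylorPolynomial (fun k => D k x) m (y - x)| ≤
      M * dist x y ^ α *
        ∑ k ∈ Nat.antidiagonalTuple d m, monomialDivFactorial (fun i => |y i - x i|) k := by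
  have hbox : uIcc x y ⊆ Icc l u := uIcc_subset_Icc hx hy
  refine abs_sub_taylorPolynomial_le m (fun b hb i z hz => ?_) (fun b hb z hz => ?_)
  · exact (hD b hb i z (hbox hz)).mono (uIcc_subset_Icc ⟨hx.1 i, hx.2 i⟩ ⟨hy.1 i, hy.2 i⟩)
  · have hzx : dist z x ≤ dist x y := by
      refine dist_pi_le_iff dist_nonneg |>.2 fun i => ?_
      rw [← pi_univ_uIcc] at hz
      rw [dist_comm]
      exact (Real.dist_left_le_of_mem_uIcc (hz i trivial)).trans (dist_le_pi_dist x y i)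
    calc |D b z - D b x| ≤ M * dist z x ^ α := hhold b hb z (hbox hz) x hx
      _ ≤ M * dist x y ^ α := by gcongr

theorem rough_path_envelope_bound_general
    {d : ℕ} {ι : Type*} [Fintype ι]
    (β M C3 h : ℝ) (hM : 0 < M) (hh : 0 < h)
    (m : ℕ) (hm : (m : ℝ) < β ∧ β ≤ m + 1)
    (s : Fin d → ℕ)
    (D : (Fin d → ℕ) → (Fin d → ℝ) → ℝ)
    (hderiv : ∀ b : Fin d → ℕ, (∑ i, b i) < m → ∀ i : Fin d,
      ∀ x ∈ Icc (0 : Fin d → ℝ) 1,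
        HasDerivWithinAt (fun t : ℝ => D b (Function.update x i t))
          (D (Function.update b i (b i + 1)) x) (Icc (0:ℝ) 1) (x i))
    (hhold : ∀ b : Fin d → ℕ, (∑ i, b i) = m →
      ∀ x ∈ Icc (0 : Fin d → ℝ) 1, ∀ y ∈ Icc (0 : Fin d → ℝ) 1,
        |D b x - D b y| ≤ M * dist x y ^ (β - m))
    (xj : ι → (Fin d → ℝ)) (hxj : ∀ j, xj j ∈ Icc (0 : Fin d → ℝ) 1)
    (w : (Fin d → ℝ) → ι → ℝ)
    (hrep : ∀ x ∈ Icc (0 : Fin d → ℝ) 1, ∀ r : Fin d → ℕ, (∑ i, r i) ≤ m →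
      ∑ j, (∏ i, (xj j i - x i) ^ r i) * w x j = 0)
    (hloc : ∀ x ∈ Icc (0 : Fin d → ℝ) 1, ∀ j, h < dist x (xj j) → w x j = 0)
    (hsum : ∀ x ∈ Icc (0 : Fin d → ℝ) 1, ∑ j, |w x j| ≤ C3 / h ^ (∑ i, s i)) :
    ∀ x ∈ Icc (0 : Fin d → ℝ) 1,
      |∑ j, w x j * D 0 (xj j)| ≤
        C3 * M * h ^ (β - ((∑ i, s i : ℕ) : ℝ)) *
          ∑ k ∈ Finset.Nat.antidiagonalTuple d m,
            (1 / ∏ i, (Nat.factorial (k i) : ℝ)) := by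
  intro x hx
  set S := ∑ k ∈ Finset.Nat.antidiagonalTuple d m, (1 / ∏ i, (Nat.factorial (k i) : ℝ))
  have hβm : 0 ≤ β - m := sub_nonneg.2 hm.1.le
  have hremainder : ∀ j, w x j ≠ 0 →
      |D 0 (xj j) - taylorPolynomial (fun k => D k x) m (xj j - x)| ≤
        M * h ^ (β - m) * (h ^ m * S) := by
    intro j hj
    have hdist : dist x (xj j) ≤ h := not_lt.1 (mt (hloc x hx j) hj)
    refine (abs_sub_taylorPolynomial_le_of_holder hM.le hβm m hderiv hhold hx (hxj j)).trans
      (mul_le_mul (by gcongr) (sum_antidiagonalTuple_monomialDivFactorial_le (fun i => ?_) m)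
        (sum_nonneg fun k _ => prod_nonneg fun i _ => by positivity)
        (mul_nonneg hM.le (by positivity)))
    rw [← Real.dist_eq, dist_comm]
    exact (dist_le_pi_dist x (xj j) i).trans hdist
  calc |∑ j, w x j * D 0 (xj j)| ≤ M * h ^ (β - m) * (h ^ m * S) * ∑ j, |w x j| :=
        abs_sum_mul_le_of_abs_sub_le
          (sum_mul_taylorPolynomial_eq_zero _ (xj · - x) m (hrep x hx) _) hremainder
    _ ≤ M * h ^ (β - m) * (h ^ m * S) * (C3 / h ^ (∑ i, s i)) := by
        gcongr
        exact hsum x hx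
    _ = C3 * M * h ^ (β - ((∑ i, s i : ℕ) : ℝ)) * S := by
        rw [← Real.rpow_natCast h m, ← Real.rpow_natCast h (∑ i, s i), Real.rpow_sub hh,
          Real.rpow_sub hh]
        field_simp

/-- Envelope bound for rough paths: `Z` (encoded by its derivatives `D`, `D 0 = Z`) has
partial derivatives up to order `m = ⌊β⌋`, the order-`m` derivatives being Hölder of
exponent `β - m ∈ (0,1]` with constant `M`. For a multi-index `s` with `|s| > β` and
weights annihilating all monomials of degree `≤ m`, localized at bandwidth `h` and with
absolute sums `≤ C₃ h^{-|s|}`, one has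
`sup_x |∑_j w_j(x) Z(x_j)| ≤ C₃ M h^{β-|s|} ∑_{|k|=m} 1/k!`. -/
theorem rough_path_envelope_bound
    {d : ℕ} {ι : Type*} [Fintype ι]
    (β M C3 h : ℝ) (hM : 0 < M) (hC3 : 0 < C3) (hh : 0 < h) (hh1 : h ≤ 1)
    (m : ℕ) (hm : (m : ℝ) < β ∧ β ≤ m + 1)
    (s : Fin d → ℕ) (hsβ : β < ((∑ i, s i : ℕ) : ℝ))
    (D : (Fin d → ℕ) → (Fin d → ℝ) → ℝ)
    (hderiv : ∀ b : Fin d → ℕ, (∑ i, b i) < m → ∀ i : Fin d,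
      ∀ x ∈ Icc (0 : Fin d → ℝ) 1,
        HasDerivWithinAt (fun t : ℝ => D b (Function.update x i t))
          (D (Function.update b i (b i + 1)) x) (Icc (0:ℝ) 1) (x i))
    (hhold : ∀ b : Fin d → ℕ, (∑ i, b i) = m →
      ∀ x ∈ Icc (0 : Fin d → ℝ) 1, ∀ y ∈ Icc (0 : Fin d → ℝ) 1,
        |D b x - D b y| ≤ M * dist x y ^ (β - m))
    (xj : ι → (Fin d → ℝ)) (hxj : ∀ j, xj j ∈ Icc (0 : Fin d → ℝ) 1)
    (w : (Fin d → ℝ) → ι → ℝ)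
    (hrep : ∀ x ∈ Icc (0 : Fin d → ℝ) 1, ∀ r : Fin d → ℕ, (∑ i, r i) ≤ m →
      ∑ j, (∏ i, (xj j i - x i) ^ r i) * w x j = 0)
    (hloc : ∀ x ∈ Icc (0 : Fin d → ℝ) 1, ∀ j, h < dist x (xj j) → w x j = 0)
    (hsum : ∀ x ∈ Icc (0 : Fin d → ℝ) 1, ∑ j, |w x j| ≤ C3 / h ^ (∑ i, s i)) :
    ∀ x ∈ Icc (0 : Fin d → ℝ) 1,
      |∑ j, w x j * D 0 (xj j)| ≤
        C3 * M * h ^ (β - ((∑ i, s i : ℕ) : ℝ)) *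
          ∑ k ∈ Finset.Nat.antidiagonalTuple d m,
            (1 / ∏ i, (Nat.factorial (k i) : ℝ)) :=
  rough_path_envelope_bound_general β M C3 h hM hh m hm s D hderiv hhold xj hxj w hrep hloc hsum
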